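/- arXiv:1911.13054 — 2 statements merged into one kernel-verified Lean document; each statement's English description precedes it below -/
import Mathlib

section
/- Fine and Wilf bound for the left-periodic case: if x and y are finite words with xy ≠ yx, then the longest common suffix of x^m and y^n (for all m, n large enough, equivalently lcs(xy, yx)) has length strictly less than |x| + |y| − gcd(|x|, |y|). -/
/-!
A common suffix `w` of `xy` and `yx` with `|x| + |y| ≤ |w| + gcd(|x|, |y|)` and `|x| ≤ |y|` contains
both `x` and `y`, so `y = ux`, and removing the final `x` from `w` leaves a common suffix of `xu`
and `ux` that is again long enough, since `gcd(|x|, |u|) = gcd(|x|, |y|)`. This Euclidean descent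
ends with an empty word, and `xu = ux` gives back `xy = yx`.
-/

variable {α : Type*} [DecidableEq α]

/-- Longest common prefix of two finite words. -/
def lcp : List α → List α → List α
  | a :: u, b :: v => if a = b then a :: lcp u v else []
  | _, _ => []

/-- Longest common suffix of two finite words. -/
def lcs (u v : List α) : List α := (lcp u.reverse v.reverse).reverse

/-- `wpow x k` is the `k`-fold concatenation `x^k`. -/
def wpow (x : List α) (k : ℕ) : List α := (List.replicate k x).flatten

theorem lcp_prefix_left (u v : List α) : lcp u v <+: u := by
  fun_induction lcp u v <;> simp_all

theorem lcp_prefix_right (u v : List α) : lcp u v <+: v := by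
  fun_induction lcp u v <;> simp_all

theorem lcs_suffix_left (u v : List α) : lcs u v <:+ u := by
  simpa [lcs] using List.reverse_suffix.mpr (lcp_prefix_left u.reverse v.reverse)

theorem lcs_suffix_right (u v : List α) : lcs u v <:+ v := by
  simpa [lcs] using List.reverse_suffix.mpr (lcp_prefix_right u.reverse v.reverse)

theorem append_comm_of_common_suffix {β : Type*} {x y w : List β}
    (hxy : w <:+ x ++ y) (hyx : w <:+ y ++ x)
    (hlen : x.length + y.length ≤ w.length + x.length.gcd y.length) : x ++ y = y ++ x := by
  induction hn : x.length + y.length using Nat.strong_induction_on generalizing x y w with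
  | _ n ih =>
  wlog hle : x.length ≤ y.length generalizing x y
  · exact (this hyx hxy (by rw [Nat.gcd_comm]; omega) (by omega) (by omega)).symm
  obtain rfl | hx := eq_or_ne x []
  · simp
  have hxpos : 0 < x.length := List.length_pos_iff.mpr hx
  have hg : x.length.gcd y.length ≤ x.length := Nat.gcd_le_left _ hxpos
  have hyw : y <:+ w := List.suffix_of_suffix_length_le (List.suffix_append x y) hxy (by omega)
  have hxw : x <:+ w := List.suffix_of_suffix_length_le (List.suffix_append y x) hyx (by omega)
  obtain ⟨u, rfl⟩ : x <:+ y := List.suffix_of_suffix_length_le hxw hyw hle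
  obtain ⟨t, rfl⟩ := hxw
  rw [← List.append_assoc] at hxy
  rw [List.suffix_append_self_iff] at hxy hyx
  have hgcd : x.length.gcd (u.length + x.length) = x.length.gcd u.length :=
    Nat.gcd_add_self_right _ _
  simp only [List.length_append, hgcd] at hlen hn
  rw [← List.append_assoc, ih _ (by omega) hxy hyx (by omega) rfl, List.append_assoc]

theorem fine_wilf_lcs (x y : List α) (h : x ++ y ≠ y ++ x) :
    (lcs (x ++ y) (y ++ x)).length + Nat.gcd x.length y.length <
      x.length + y.length := by
  by_contra! hlen
  exact h (append_comm_of_common_suffix (lcs_suffix_left _ _) (lcs_suffix_right _ _) hlen)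
end

section
/- Let L, L' be nonempty sets of finite words over Σ with R = lcs(L) and R' = lcs(L'). Suppose R ∈ L and every word zR' ∈ L' with z ≠ ε satisfies R ≤ z^ω in the sense that R is a suffix of z^k for some (every sufficiently large) k. Then lcs(L·L') = R·R', where L·L' = {vw | v ∈ L, w ∈ L'}. -/
/-!
Every word of `L'` is `z ++ R'`, and `R` being a suffix of some `z ^ k` forces `R` to be a
suffix of `R ++ z`; hence `R ++ R'` is a suffix of every `v ++ z ++ R'`. Conversely, a common
suffix `s` of `L·L'` is one of `R·L'`, so its last `|s| - |R|` letters are common to `L'` and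
`|s| ≤ |R| + |R'|`; as `s` and `R ++ R'` are both suffixes of `R ++ w₀` for any `w₀ ∈ L'`,
`s` is a suffix of `R ++ R'`.
-/

variable {α : Type*} [DecidableEq α]

/-- `R` is the longest common suffix of the language `L`. -/
def IsLCS (L : Set (List α)) (R : List α) : Prop :=
  (∀ w ∈ L, R <:+ w) ∧ ∀ s : List α, (∀ w ∈ L, s <:+ w) → s <:+ R

section

omit [DecidableEq α]

lemma wpow_succ (x : List α) (k : ℕ) : wpow x (k + 1) = x ++ wpow x k := by
  simp [wpow, List.replicate_succ]

lemma wpow_succ' (x : List α) (k : ℕ) : wpow x (k + 1) = wpow x k ++ x := by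
  simp [wpow, List.replicate_succ']

/-- Both `R ++ z` and `R` are suffixes of `z ^ (k + 1)`, and the former is the longer. -/
lemma suffix_append_of_suffix_wpow {R z : List α} {k : ℕ} (h : R <:+ wpow z k) :
    R <:+ R ++ z := by
  have hRz : R ++ z <:+ wpow z (k + 1) := by
    rw [wpow_succ']
    exact List.suffix_append_self_iff.mpr h
  have hR : R <:+ wpow z (k + 1) := by
    rw [wpow_succ]
    exact List.suffix_append_of_suffix h
  exact List.suffix_of_suffix_length_le hR hRz (by simp)

/-- The last `|s| - |u|` letters of `s` form a common suffix of `L'`. -/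
lemma IsLCS.length_le_of_forall_suffix_append {L' : Set (List α)} {R' s : List α}
    (hR' : IsLCS L' R') (u : List α) (hs : ∀ w' ∈ L', s <:+ u ++ w') :
    s.length ≤ u.length + R'.length := by
  have hcommon : ∀ w' ∈ L', s.drop u.length <:+ w' := fun w' hw' => by
    refine List.suffix_of_suffix_length_le ((s.drop_suffix _).trans (hs w' hw'))
      (List.suffix_append u w') ?_
    have := (hs w' hw').length_le
    simp only [List.length_drop, List.length_append] at this ⊢
    omega
  have := (hR'.2 _ hcommon).length_le
  rw [List.length_drop] at this
  omega

lemma isLCS_of_forall_length_le {M : Set (List α)} {T : List α} (hM : M.Nonempty)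
    (hT : ∀ w ∈ M, T <:+ w) (hmax : ∀ s, (∀ w ∈ M, s <:+ w) → s.length ≤ T.length) :
    IsLCS M T := by
  obtain ⟨w, hw⟩ := hM
  exact ⟨hT, fun s hs => List.suffix_of_suffix_length_le (hs w hw) (hT w hw) (hmax s hs)⟩

lemma append_suffix_append_append {R R' v z : List α} (hv : R <:+ v)
    (hz : z ≠ [] → ∃ k, R <:+ wpow z k) : R ++ R' <:+ v ++ (z ++ R') := by
  rw [← List.append_assoc]
  refine List.suffix_append_self_iff.mpr ?_
  rcases eq_or_ne z [] with rfl | hz_ne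
  · simpa using hv
  · obtain ⟨k, hk⟩ := hz hz_ne
    exact (suffix_append_of_suffix_wpow hk).trans (List.suffix_append_self_iff.mpr hv)

end

theorem lcs_concat (L L' : Set (List α)) (R R' : List α)
    (hR : IsLCS L R) (hR' : IsLCS L' R') (hRL : R ∈ L)
    (hext : ∀ z : List α, z ++ R' ∈ L' → z ≠ [] → ∃ k, R <:+ wpow z k) :
    IsLCS {w | ∃ v ∈ L, ∃ w' ∈ L', w = v ++ w'} (R ++ R') := by
  have hsuffix : ∀ w ∈ {w | ∃ v ∈ L, ∃ w' ∈ L', w = v ++ w'}, R ++ R' <:+ w := by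
    rintro _ ⟨v, hv, w', hw', rfl⟩
    obtain ⟨z, rfl⟩ := hR'.1 w' hw'
    exact append_suffix_append_append (hR.1 v hv) (hext z hw')
  rcases L'.eq_empty_or_nonempty with rfl | ⟨w₀, hw₀⟩
  · exact ⟨hsuffix, fun s _ => (hR'.2 s (by simp)).trans (List.suffix_append R R')⟩
  refine isLCS_of_forall_length_le ⟨R ++ w₀, R, hRL, w₀, hw₀, rfl⟩ hsuffix fun s hs => ?_
  simpa using hR'.length_le_of_forall_suffix_append R fun w' hw' => hs _ ⟨R, hRL, w', hw', rfl⟩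
end
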